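/- Let X be a real inner product space, x, y ∈ X and 0 < m < M. If ⟨M•y − x, x − m•y⟩ ≥ 0, then ‖x‖·‖y‖ ≤ (1/2)·((M + m)/√(M·m))·⟨x,y⟩. -/

import Mathlib

/-! Expanding the hypothesis gives `‖x‖² + M m ‖y‖² ≤ (M + m) ⟪x, y⟫`, and by AM-GM the left side
is at least `2 √(M m) ‖x‖ ‖y‖`. -/

open scoped RealInnerProductSpace

theorem real_inner_smul_sub_sub_smul {X : Type*} [NormedAddCommGroup X] [InnerProductSpace ℝ X]
    (x y : X) (M m : ℝ) :
    ⟪M • y - x, x - m • y⟫ = (M + m) * ⟪x, y⟫ - ‖x‖ ^ 2 - M * m * ‖y‖ ^ 2 := by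
  simp only [inner_sub_left, inner_sub_right, real_inner_smul_left, real_inner_smul_right,
    real_inner_self_eq_norm_sq, real_inner_comm y x]
  ring

theorem two_mul_sqrt_mul_mul_le_sq_add_mul_sq {c : ℝ} (hc : 0 ≤ c) (a b : ℝ) :
    2 * √c * (a * b) ≤ a ^ 2 + c * b ^ 2 := by
  have := two_mul_le_add_sq a (√c * b)
  rw [mul_pow, Real.sq_sqrt hc] at this
  linarith

theorem reverse_cbs_real_mult {X : Type*} [NormedAddCommGroup X]
    [InnerProductSpace ℝ X] (x y : X) (m M : ℝ) (hm : 0 < m) (hmM : m < M)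
    (h : 0 ≤ ⟪M • y - x, x - m • y⟫) :
    ‖x‖ * ‖y‖ ≤ (1 / 2) * ((M + m) / Real.sqrt (M * m)) * ⟪x, y⟫ := by
  have hMm : 0 < M * m := mul_pos (hm.trans hmM) hm
  have hs : 0 < √(M * m) := Real.sqrt_pos.mpr hMm
  have key : 2 * √(M * m) * (‖x‖ * ‖y‖) ≤ (M + m) * ⟪x, y⟫ := by
    rw [real_inner_smul_sub_sub_smul] at h
    linarith [two_mul_sqrt_mul_mul_le_sq_add_mul_sq hMm.le ‖x‖ ‖y‖]
  calc ‖x‖ * ‖y‖ ≤ (M + m) * ⟪x, y⟫ / (2 * √(M * m)) := by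
        rw [le_div_iff₀ (by positivity)]
        linarith
    _ = (1 / 2) * ((M + m) / √(M * m)) * ⟪x, y⟫ := by
        field_simp
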